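/- For every theory Γ of extended first-order sentences over σ and every ht-interpretation ⟨H,I⟩: ⟨H,I⟩ ⊨ht Γ iff I^H ⊨ γΓ (classically). -/

import Mathlib

/-! ### Programs with aggregates: syntax -/

/-- Ground program terms: numerals, symbolic constants, `#inf`, `#sup`. -/
inductive PTerm : Type where
  | inf : PTerm
  | num : ℤ → PTerm
  | sym : ℕ → PTerm
  | sup : PTerm
deriving DecidableEq

/-- The chosen total order on ground program terms: `#inf` least, `#sup` greatest,
numerals ordered as the integers and below all symbolic constants. -/
def PTerm.le : PTerm → PTerm → Prop
  | .inf, _ => True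
  | _, .sup => True
  | .sup, _ => False
  | _, .inf => False
  | .num m, .num n => m ≤ n
  | .num _, .sym _ => True
  | .sym _, .num _ => False
  | .sym a, .sym b => a ≤ b

def PTerm.lt (a b : PTerm) : Prop := PTerm.le a b ∧ a ≠ b

/-- Comparison symbols: `=`, `≠`, `<`, `>`, `≤`, `≥`. -/
inductive Cmp : Type where
  | ceq | cneq | clt | cgt | cle | cge
deriving DecidableEq

def Cmp.holds : Cmp → PTerm → PTerm → Prop
  | .ceq, a, b => a = b
  | .cneq, a, b => a ≠ b
  | .clt, a, b => PTerm.lt a b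
  | .cgt, a, b => PTerm.lt b a
  | .cle, a, b => PTerm.le a b
  | .cge, a, b => PTerm.le b a

instance : DecidablePred (Function.uncurry PTerm.le) := by
  rintro ⟨a, b⟩
  cases a <;> cases b <;> simp [Function.uncurry, PTerm.le] <;> infer_instance

instance (a b : PTerm) : Decidable (PTerm.le a b) :=
  inferInstanceAs (Decidable (Function.uncurry PTerm.le (a, b)))

instance (a b : PTerm) : Decidable (PTerm.lt a b) := by unfold PTerm.lt; infer_instance

instance (c : Cmp) (a b : PTerm) : Decidable (c.holds a b) := by
  cases c <;> simp [Cmp.holds] <;> infer_instance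

/-- Program terms: ground terms or program variables (variables are natural
numbers, giving a countably infinite supply; their order is used as the
lexicographic order on variables). -/
inductive PrgTerm : Type where
  | ground : PTerm → PrgTerm
  | var : ℕ → PrgTerm
deriving DecidableEq

/-- An atom `p(t₁,…,tₙ)`. -/
structure Atom : Type where
  pred : ℕ
  args : List PrgTerm
deriving DecidableEq

/-- Atomic formulas: atoms and comparisons. -/
inductive AtomicF : Type where
  | atm : Atom → AtomicF
  | cmp : PrgTerm → Cmp → PrgTerm → AtomicF
deriving DecidableEq

/-- Zero, one or two occurrences of `not`. -/
inductive Nots : Type where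
  | zero | one | two
deriving DecidableEq

/-- A basic literal: an atomic formula preceded by zero, one or two `not`. -/
structure BLit : Type where
  nots : Nots
  af : AtomicF
deriving DecidableEq

/-- An aggregate element `t₁,…,t_k : l₁,…,l_m`. -/
structure AggElem : Type where
  terms : List PrgTerm
  lits : List BLit
deriving DecidableEq

/-- Aggregate operation names. -/
inductive AggOp : Type where
  | count | sum
deriving DecidableEq

/-- An aggregate atom `#op{E} ≺ u`. -/
structure AggAtom : Type where
  op : AggOp
  elem : AggElem
  rel : Cmp
  guard : PrgTerm
deriving DecidableEq

/-- An aggregate literal: an aggregate atom preceded by zero, one or two `not`. -/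
structure AggLit : Type where
  nots : Nots
  agg : AggAtom
deriving DecidableEq

/-- Literals. -/
inductive Lit : Type where
  | basic : BLit → Lit
  | aggr : AggLit → Lit
deriving DecidableEq

/-- A rule `Head :- B₁,…,Bₙ` (`head = none` represents `⊥`, i.e. a constraint). -/
structure Rule : Type where
  head : Option Atom
  body : List Lit
deriving DecidableEq

/-- A program is a set of rules. -/
abbrev Program : Type := Set Rule

/-! ### Variables, global variables, set symbols -/

def PrgTerm.varsL : PrgTerm → List ℕ
  | .ground _ => []
  | .var v => [v]

def Atom.varsL (a : Atom) : List ℕ :=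
  a.args.foldr (fun t acc => t.varsL ++ acc) []

def AtomicF.varsL : AtomicF → List ℕ
  | .atm a => a.varsL
  | .cmp l _ r => l.varsL ++ r.varsL

def BLit.varsL (l : BLit) : List ℕ := l.af.varsL

def AggElem.varsL (e : AggElem) : List ℕ :=
  e.terms.foldr (fun t acc => t.varsL ++ acc) [] ++
  e.lits.foldr (fun l acc => l.varsL ++ acc) []

/-- The variables that are global in a rule: those occurring in a non-aggregate
literal or in a guard of an aggregate literal. -/
def Rule.globalVarsL (R : Rule) : List ℕ :=
  R.body.foldr (fun l acc =>
    (match l with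
      | .basic b => b.varsL
      | .aggr a => a.agg.guard.varsL) ++ acc) []

/-- The lexicographically (i.e. numerically) sorted duplicate-free list of a list
of variables. -/
def sortedL (l : List ℕ) : List ℕ := l.dedup.insertionSort (· ≤ ·)

/-- The sorted list of variables of the rule that are global. -/
def globalVarsSorted (R : Rule) : List ℕ := sortedL R.globalVarsL

/-- For an aggregate element `E` occurring in rule `R`, the lexicographically
ordered list `X` of all variables of `E` that are global in `R`. -/
def aggX (R : Rule) (E : AggElem) : List ℕ :=
  sortedL (E.varsL.filter (fun v => v ∈ R.globalVarsL))

/-- The lexicographically ordered list `Y` of the variables occurring in `E`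
that are not in `X` (the "local" variables). -/
def localsOf (E : AggElem) (X : List ℕ) : List ℕ :=
  sortedL (E.varsL.filter (fun v => v ∉ X))

/-- A set symbol `E/X`. -/
structure SetSymbol : Type where
  elem : AggElem
  gvars : List ℕ
deriving DecidableEq

/-- The set symbols occurring in a program. -/
def ssymsOf (Pi : Program) : Set SetSymbol :=
  { s | ∃ R ∈ Pi, ∃ l : AggLit, Lit.aggr l ∈ R.body ∧
        s = ⟨l.agg.elem, aggX R l.agg.elem⟩ }

def AtomicF.atomL : AtomicF → List Atom
  | .atm a => [a]
  | .cmp _ _ _ => []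

/-- All atoms occurring in a rule (head, basic body literals, and literals inside
aggregate elements). -/
def Rule.atomsL (R : Rule) : List Atom :=
  (match R.head with | some a => [a] | none => []) ++
  R.body.foldr (fun l acc =>
    (match l with
      | .basic b => b.af.atomL
      | .aggr al => al.agg.elem.lits.foldr (fun b acc2 => b.af.atomL ++ acc2) []) ++ acc) []

/-- The predicate symbols (name/arity pairs) occurring in a program. -/
def predsOf (Pi : Program) : Set (ℕ × ℕ) :=
  { pn | ∃ R ∈ Pi, ∃ a ∈ R.atomsL, pn = (a.pred, a.args.length) }

/-! ### The functions associated with the aggregate names -/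

/-- The weight of a tuple of ground terms. -/
def tupleWeight : List PTerm → ℤ
  | (PTerm.num n) :: _ => n
  | _ => 0

open scoped Classical in
/-- `count^`. -/
noncomputable def countHat (Δ : Set (List PTerm)) : PTerm :=
  if h : Δ.Finite then .num h.toFinset.card else .sup

/-- `sum^`: the sum of the weights of the tuples in `Δ` if only finitely many
tuples have non-zero weight, and `0` otherwise. -/
noncomputable def sumHat (Δ : Set (List PTerm)) : PTerm :=
  .num (∑ᶠ t ∈ Δ, tupleWeight t)

noncomputable def AggOp.hat : AggOp → Set (List PTerm) → PTerm
  | .count => countHat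
  | .sum => sumHat

/-! ### Three-sorted signatures and interpretations -/

/-- A three-sorted signature for programs with aggregates: predicate symbols (with
arities), set-valued function symbols, and tuple-forming function symbols.  The
remaining symbols (ground program terms as constants of the general sort, the
comparison predicates, membership `∈`, and `count`/`sum`) are the same in every
such signature and are built into the syntax below. -/
structure ASig : Type 1 where
  PSym : Type
  parity : PSym → ℕ
  SSym : Type
  sarity : SSym → ℕ
  TSym : Type
  tarity : TSym → ℕ

/-- The universe of the tuple sort: all tuples of elements of the general sort
whose length is the arity of some tuple-forming function. -/
def tupDom (σ : ASig) : Set (List PTerm) :=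
  { l | ∃ f : σ.TSym, l.length = σ.tarity f }

mutual
  /-- Ground terms of the general sort (with names of domain elements). -/
  inductive GTm (σ : ASig) : Type where
    | name : PTerm → GTm σ
    | cnt : STm σ → GTm σ
    | sm : STm σ → GTm σ
  /-- Ground terms of the tuple sort. -/
  inductive TTm (σ : ASig) : Type where
    | name : List PTerm → TTm σ
    | tup : (f : σ.TSym) → (Fin (σ.tarity f) → GTm σ) → TTm σ
  /-- Ground terms of the set sort. -/
  inductive STm (σ : ASig) : Type where
    | name : Set (List PTerm) → STm σ
    | sfn : (f : σ.SSym) → (Fin (σ.sarity f) → GTm σ) → STm σ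
end

/-- A standard interpretation of `σ`; the universes of the general and tuple sorts,
the denotations of ground program terms, the comparison predicates, the
tuple-forming functions, `∈`, `count` and `sum` are fixed, so the interpretation is
given by the universe of the set sort together with the denotations of the
predicate symbols and of the set-valued function symbols. -/
structure AInterp (σ : ASig) : Type 1 where
  setDom : Set (Set (List PTerm))
  pr : (p : σ.PSym) → (Fin (σ.parity p) → PTerm) → Prop
  sfn : (f : σ.SSym) → (Fin (σ.sarity f) → PTerm) → Set (List PTerm)

/-- The remaining conditions for being a standard interpretation: every element of
the set-sort universe is a set of tuples, and the set-valued functions take values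
in the set-sort universe. -/
def IsStd {σ : ASig} (I : AInterp σ) : Prop :=
  (∀ s ∈ I.setDom, s ⊆ tupDom σ) ∧ (∀ f a, I.sfn f a ∈ I.setDom)

mutual
  noncomputable def GTm.eval {σ : ASig} (I : AInterp σ) : GTm σ → PTerm
    | .name d => d
    | .cnt s => countHat (s.eval I)
    | .sm s => sumHat (s.eval I)
  noncomputable def TTm.eval {σ : ASig} (I : AInterp σ) : TTm σ → List PTerm
    | .name d => d
    | .tup _ args => List.ofFn (fun i => (args i).eval I)
  noncomputable def STm.eval {σ : ASig} (I : AInterp σ) : STm σ → Set (List PTerm)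
    | .name d => d
    | .sfn f args => I.sfn f (fun i => (args i).eval I)
end

/-- Extended first-order sentences over `σ^I` (quantified bodies are represented
by functions on names of domain elements of the respective sort). -/
inductive AFml (σ : ASig) : Type 1 where
  | patom : (p : σ.PSym) → (Fin (σ.parity p) → GTm σ) → AFml σ
  | cmp : Cmp → GTm σ → GTm σ → AFml σ
  | mem : TTm σ → STm σ → AFml σ
  | teq : TTm σ → TTm σ → AFml σ
  | seq : STm σ → STm σ → AFml σ
  | fls : AFml σ
  | conj : AFml σ → AFml σ → AFml σ
  | disj : AFml σ → AFml σ → AFml σ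
  | impl : AFml σ → AFml σ → AFml σ
  | snot : AFml σ → AFml σ
  | gall : (PTerm → AFml σ) → AFml σ
  | gex : (PTerm → AFml σ) → AFml σ
  | tall : (List PTerm → AFml σ) → AFml σ
  | tex : (List PTerm → AFml σ) → AFml σ
  | sall : (Set (List PTerm) → AFml σ) → AFml σ
  | sex : (Set (List PTerm) → AFml σ) → AFml σ

/-- `¬F` abbreviates `F → ⊥`. -/
def AFml.neg {σ : ASig} (F : AFml σ) : AFml σ := .impl F .fls

/-- Classical satisfaction (`⌐` is classical negation). -/
def satA {σ : ASig} (I : AInterp σ) : AFml σ → Prop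
  | .patom p args => I.pr p (fun i => (args i).eval I)
  | .cmp c l r => c.holds (l.eval I) (r.eval I)
  | .mem t s => t.eval I ∈ s.eval I
  | .teq l r => l.eval I = r.eval I
  | .seq l r => l.eval I = r.eval I
  | .fls => False
  | .conj F G => satA I F ∧ satA I G
  | .disj F G => satA I F ∨ satA I G
  | .impl F G => satA I F → satA I G
  | .snot F => ¬ satA I F
  | .gall F => ∀ d : PTerm, satA I (F d)
  | .gex F => ∃ d : PTerm, satA I (F d)
  | .tall F => ∀ d ∈ tupDom σ, satA I (F d)
  | .tex F => ∃ d ∈ tupDom σ, satA I (F d)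
  | .sall F => ∀ d ∈ I.setDom, satA I (F d)
  | .sex F => ∃ d ∈ I.setDom, satA I (F d)

/-- ht-satisfaction `⟨H,I⟩ ⊨ht F`. -/
def htA {σ : ASig} (H I : AInterp σ) : AFml σ → Prop
  | .patom p args => satA I (.patom p args) ∧ satA H (.patom p args)
  | .cmp c l r => satA I (.cmp c l r) ∧ satA H (.cmp c l r)
  | .mem t s => satA I (.mem t s) ∧ satA H (.mem t s)
  | .teq l r => (l.eval I = r.eval I) ∧ (l.eval H = r.eval H)
  | .seq l r => (l.eval I = r.eval I) ∧ (l.eval H = r.eval H)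
  | .fls => False
  | .conj F G => htA H I F ∧ htA H I G
  | .disj F G => htA H I F ∨ htA H I G
  | .impl F G => (satA I F → satA I G) ∧ (¬ htA H I F ∨ htA H I G)
  | .snot F => ¬ satA I F ∧ ¬ satA H F
  | .gall F => ∀ d : PTerm, htA H I (F d)
  | .gex F => ∃ d : PTerm, htA H I (F d)
  | .tall F => ∀ d ∈ tupDom σ, htA H I (F d)
  | .tex F => ∃ d ∈ tupDom σ, htA H I (F d)
  | .sall F => ∀ d ∈ I.setDom, htA H I (F d)
  | .sex F => ∃ d ∈ I.setDom, htA H I (F d)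

/-- `H ⪯^{IP,IFn} I`: same universes, `p^H ⊆ p^I` for intensional predicates,
`p^H = p^I` for the other predicates, and `f^H = f^I` for non-intensional
(set-valued) function symbols.  (All remaining symbols are fixed.) -/
def preceqA {σ : ASig} (IP : Set σ.PSym) (IFn : Set σ.SSym) (H I : AInterp σ) : Prop :=
  H.setDom = I.setDom ∧
  (∀ p ∈ IP, ∀ a, H.pr p a → I.pr p a) ∧
  (∀ p ∉ IP, ∀ a, H.pr p a ↔ I.pr p a) ∧
  (∀ f ∉ IFn, ∀ a, H.sfn f a = I.sfn f a)

def satTh {σ : ASig} (I : AInterp σ) (Γ : Set (AFml σ)) : Prop := ∀ F ∈ Γ, satA I F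

def htSatTh {σ : ASig} (H I : AInterp σ) (Γ : Set (AFml σ)) : Prop := ∀ F ∈ Γ, htA H I F

/-- The two semantics. -/
inductive Sem : Type where
  | cli | dlv
deriving DecidableEq

/-- The signature `σ(𝒫,𝒮)`: predicate symbols from `𝒫` (name/arity pairs), the
set-valued function symbols `s^cli_{E/X}`, `s^dlv_{E/X}` for `E/X ∈ 𝒮`, and the
tuple-forming functions `tuple_{E/X}`. -/
def sigPS (P : Set (ℕ × ℕ)) (S : Set SetSymbol) : ASig where
  PSym := ↥P
  parity := fun p => p.val.2
  SSym := Sem × ↥S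
  sarity := fun f => f.2.val.gvars.length
  TSym := ↥S
  tarity := fun f => f.val.elem.terms.length

/-! ### The translations `τ^cli` and `τ^dlv` -/

open scoped Classical

/-- Instantiating a program term by an assignment of ground terms to variables. -/
def PrgTerm.toP (env : ℕ → PTerm) : PrgTerm → PTerm
  | .ground t => t
  | .var v => env v

/-- Assign the values `a` to the variables in the list `X`, deferring to `base`
on other variables. -/
noncomputable def assign (X : List ℕ) (a : Fin X.length → PTerm) (base : ℕ → PTerm) :
    ℕ → PTerm :=
  fun v => if h : v ∈ X then a ⟨X.idxOf v, List.idxOf_lt_length_iff.mpr h⟩ else base v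

noncomputable def trAtomA (P : Set (ℕ × ℕ)) (S : Set SetSymbol)
    (env : ℕ → PTerm) (a : Atom) : AFml (sigPS P S) :=
  if h : (a.pred, a.args.length) ∈ P then
    .patom ⟨(a.pred, a.args.length), h⟩ (fun i => .name ((a.args.get i).toP env))
  else .fls

noncomputable def trAFA (P : Set (ℕ × ℕ)) (S : Set SetSymbol)
    (env : ℕ → PTerm) : AtomicF → AFml (sigPS P S)
  | .atm a => trAtomA P S env a
  | .cmp l c r => .cmp c (.name (l.toP env)) (.name (r.toP env))

/-- Translation of `not`: `¬` for the clingo semantics and `⌐` for the dlv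
semantics. -/
def applyNots {σ : ASig} (x : Sem) : Nots → AFml σ → AFml σ
  | .zero, F => F
  | .one, F => match x with | .cli => F.neg | .dlv => .snot F
  | .two, F => match x with | .cli => F.neg.neg | .dlv => .snot (.snot F)

noncomputable def trBLitA (P : Set (ℕ × ℕ)) (S : Set SetSymbol) (x : Sem)
    (env : ℕ → PTerm) (l : BLit) : AFml (sigPS P S) :=
  applyNots x l.nots (trAFA P S env l.af)

/-- Translation of an aggregate atom `#op{E} ≺ u` occurring with global variable
list `X`: the comparison `op(s^x_{E/X}(X)) ≺ u`. -/
noncomputable def trAggAtomA (P : Set (ℕ × ℕ)) (S : Set SetSymbol) (x : Sem)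
    (X : List ℕ) (env : ℕ → PTerm) (A : AggAtom) : AFml (sigPS P S) :=
  if h : (⟨A.elem, X⟩ : SetSymbol) ∈ S then
    .cmp A.rel
      ((match A.op with
        | .count => GTm.cnt
        | .sum => GTm.sm)
        (STm.sfn ((x, ⟨⟨A.elem, X⟩, h⟩) : (sigPS P S).SSym)
          (fun i => .name (env (X.get i)))))
      (.name (A.guard.toP env))
  else .fls

noncomputable def trLitA (P : Set (ℕ × ℕ)) (S : Set SetSymbol) (x : Sem)
    (R : Rule) (env : ℕ → PTerm) : Lit → AFml (sigPS P S)
  | .basic l => trBLitA P S x env l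
  | .aggr l => applyNots x l.nots (trAggAtomA P S x (aggX R l.agg.elem) env l.agg)

/-- Conjunction of a list of formulas (`⊤ = ¬⊥` for the empty list). -/
def conjL {σ : ASig} : List (AFml σ) → AFml σ
  | [] => AFml.fls.neg
  | [F] => F
  | F :: G :: rest => .conj F (conjL (G :: rest))

noncomputable def trMatrix (P : Set (ℕ × ℕ)) (S : Set SetSymbol) (x : Sem)
    (R : Rule) (env : ℕ → PTerm) : AFml (sigPS P S) :=
  .impl (conjL (R.body.map (trLitA P S x R env)))
        (match R.head with | some a => trAtomA P S env a | none => .fls)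

/-- Universal closure over a list of (general-sort) variables. -/
noncomputable def closeG {σ : ASig} : List ℕ → ((ℕ → PTerm) → AFml σ) → (ℕ → PTerm) → AFml σ
  | [], k, env => k env
  | v :: vs, k, env => .gall (fun d => closeG vs k (Function.update env v d))

/-- `τ^x R`: the universal closure, over the global variables of `R`, of
`τ^x_Z B₁ ∧ … ∧ τ^x_Z Bₙ → τ^x_Z Head`. -/
noncomputable def trRuleA (P : Set (ℕ × ℕ)) (S : Set SetSymbol) (x : Sem)
    (R : Rule) : AFml (sigPS P S) :=
  closeG (globalVarsSorted R) (trMatrix P S x R) (fun _ => .inf)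

/-- `τ^x Pi`: the theory containing `τ^x R` for each rule `R` of `Pi`. -/
def trProgA (P : Set (ℕ × ℕ)) (S : Set SetSymbol) (x : Sem) (Pi : Program) :
    Set (AFml (sigPS P S)) :=
  { F | ∃ R ∈ Pi, F = trRuleA P S x R }

/-! ### agg-interpretations and agg-ht-interpretations -/

/-- The assignment sending the global variables `X` to `a`, the local variables
`Y` to `y`, and everything else to a fixed ground term. -/
noncomputable def envXY (X : List ℕ) (a : Fin X.length → PTerm)
    (Y : List ℕ) (y : Fin Y.length → PTerm) : ℕ → PTerm :=
  assign X a (assign Y y (fun _ => .inf))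

/-- The set of tuples `⟨(t₁)^{XY}_{xy},…,(t_k)^{XY}_{xy}⟩` (over instantiations `y`
of the local variables of `E`) such that `I` satisfies
`τ^x(l₁)^{XY}_{xy} ∧ … ∧ τ^x(l_m)^{XY}_{xy}`. -/
def aggSetI (P : Set (ℕ × ℕ)) (S : Set SetSymbol) (x : Sem)
    (I : AInterp (sigPS P S)) (ss : SetSymbol) (a : Fin ss.gvars.length → PTerm) :
    Set (List PTerm) :=
  { t | ∃ y : Fin (localsOf ss.elem ss.gvars).length → PTerm,
      t = ss.elem.terms.map (PrgTerm.toP (envXY ss.gvars a (localsOf ss.elem ss.gvars) y)) ∧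
      ∀ l ∈ ss.elem.lits,
        satA I (trBLitA P S x (envXY ss.gvars a (localsOf ss.elem ss.gvars) y) l) }

/-- The set of tuples `⟨(t₁)^{XY}_{xy},…,(t_k)^{XY}_{xy}⟩` such that `⟨H,I⟩`
ht-satisfies `τ^cli(l₁)^{XY}_{xy} ∧ … ∧ τ^cli(l_m)^{XY}_{xy}`. -/
def aggSetHT (P : Set (ℕ × ℕ)) (S : Set SetSymbol)
    (H I : AInterp (sigPS P S)) (ss : SetSymbol) (a : Fin ss.gvars.length → PTerm) :
    Set (List PTerm) :=
  { t | ∃ y : Fin (localsOf ss.elem ss.gvars).length → PTerm,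
      t = ss.elem.terms.map (PrgTerm.toP (envXY ss.gvars a (localsOf ss.elem ss.gvars) y)) ∧
      ∀ l ∈ ss.elem.lits,
        htA H I (trBLitA P S Sem.cli (envXY ss.gvars a (localsOf ss.elem ss.gvars) y) l) }

/-- An agg-interpretation: a standard interpretation interpreting each
`s^x_{E/X}(𝐱)` as prescribed. -/
def IsAggInterp (P : Set (ℕ × ℕ)) (S : Set SetSymbol) (I : AInterp (sigPS P S)) : Prop :=
  IsStd I ∧
  ∀ (x : Sem) (ss : ↥S) (a : Fin ss.val.gvars.length → PTerm),
    I.sfn ((x, ss) : (sigPS P S).SSym) a = aggSetI P S x I ss.val a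

/-- An agg-ht-interpretation `⟨H,I⟩`: a standard ht-interpretation such that `I` is
an agg-interpretation, `s^cli_{E/X}(𝐱)^H` is the set of tuples whose
`τ^cli`-translated literals are ht-satisfied by `⟨H,I⟩`, and `s^dlv_{E/X}(𝐱)^H` is
the set of tuples whose `τ^dlv`-translated literals are satisfied by `H`. -/
def IsAggHT (P : Set (ℕ × ℕ)) (S : Set SetSymbol) (H I : AInterp (sigPS P S)) : Prop :=
  preceqA Set.univ Set.univ H I ∧ IsStd H ∧ IsAggInterp P S I ∧
  (∀ (ss : ↥S) (a : Fin ss.val.gvars.length → PTerm),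
    H.sfn ((Sem.cli, ss) : (sigPS P S).SSym) a = aggSetHT P S H I ss.val a) ∧
  (∀ (ss : ↥S) (a : Fin ss.val.gvars.length → PTerm),
    H.sfn ((Sem.dlv, ss) : (sigPS P S).SSym) a = aggSetI P S Sem.dlv H ss.val a)

/-- An agg-stable model of a theory `Γ`: an agg-model `I` of `Γ` such that there is
no agg-ht-interpretation `⟨H,I⟩` with `H ≺ I` satisfying `Γ`. -/
def IsAggStable (P : Set (ℕ × ℕ)) (S : Set SetSymbol)
    (Γ : Set (AFml (sigPS P S))) (I : AInterp (sigPS P S)) : Prop :=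
  IsAggInterp P S I ∧ satTh I Γ ∧
  ¬ ∃ H : AInterp (sigPS P S), IsAggHT P S H I ∧ H ≠ I ∧ htSatTh H I Γ

/-! ### The signature `σ̂` and the translation `γ` -/

/-- The signature `σ̂`: for every predicate symbol `p` (other than comparisons) a
new predicate `p̂`, and for every set-valued function `s^x_{E/X}` a new function
`ŝ^x_{E/X}` (the Boolean component `true` marks the hatted copy). -/
def sigHat (P : Set (ℕ × ℕ)) (S : Set SetSymbol) : ASig where
  PSym := Bool × ↥P
  parity := fun p => p.2.val.2
  SSym := Bool × Sem × ↥S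
  sarity := fun f => f.2.2.val.gvars.length
  TSym := ↥S
  tarity := fun f => f.val.elem.terms.length

mutual
  /-- Embedding of general-sort terms into `σ̂`, replacing every `s^x_{E/X}` by its
  hatted copy when `b = true`. -/
  def GTm.emb (P : Set (ℕ × ℕ)) (S : Set SetSymbol) (b : Bool) :
      GTm (sigPS P S) → GTm (sigHat P S)
    | .name d => .name d
    | .cnt s => .cnt (s.emb P S b)
    | .sm s => .sm (s.emb P S b)
  def TTm.emb (P : Set (ℕ × ℕ)) (S : Set SetSymbol) (b : Bool) :
      TTm (sigPS P S) → TTm (sigHat P S)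
    | .name d => .name d
    | .tup f args => .tup f (fun i => (args i).emb P S b)
  def STm.emb (P : Set (ℕ × ℕ)) (S : Set SetSymbol) (b : Bool) :
      STm (sigPS P S) → STm (sigHat P S)
    | .name d => .name d
    | .sfn f args => .sfn ((b, f) : (sigHat P S).SSym) (fun i => (args i).emb P S b)
end

/-- `Ê` (for `b = true`): the formula with every predicate symbol `p` replaced by
`p̂` and every `s^x_{E/X}` replaced by `ŝ^x_{E/X}`; for `b = false`, the formula
itself, viewed as a formula of `σ̂`. -/
def AFml.emb (P : Set (ℕ × ℕ)) (S : Set SetSymbol) (b : Bool) :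
    AFml (sigPS P S) → AFml (sigHat P S)
  | .patom p args => .patom ((b, p) : (sigHat P S).PSym) (fun i => (args i).emb P S b)
  | .cmp c l r => .cmp c (l.emb P S b) (r.emb P S b)
  | .mem t s => .mem (t.emb P S b) (s.emb P S b)
  | .teq l r => .teq (l.emb P S b) (r.emb P S b)
  | .seq l r => .seq (l.emb P S b) (r.emb P S b)
  | .fls => .fls
  | .conj F G => .conj (F.emb P S b) (G.emb P S b)
  | .disj F G => .disj (F.emb P S b) (G.emb P S b)
  | .impl F G => .impl (F.emb P S b) (G.emb P S b)
  | .snot F => .snot (F.emb P S b)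
  | .gall F => .gall (fun d => (F d).emb P S b)
  | .gex F => .gex (fun d => (F d).emb P S b)
  | .tall F => .tall (fun d => (F d).emb P S b)
  | .tex F => .tex (fun d => (F d).emb P S b)
  | .sall F => .sall (fun d => (F d).emb P S b)
  | .sex F => .sex (fun d => (F d).emb P S b)

/-- `Fⁿ`: the result of replacing every occurrence of `⌐` in `F` by `¬`. -/
def AFml.toN {σ : ASig} : AFml σ → AFml σ
  | .snot F => F.toN.neg
  | .conj F G => .conj F.toN G.toN
  | .disj F G => .disj F.toN G.toN
  | .impl F G => .impl F.toN G.toN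
  | .gall F => .gall (fun d => (F d).toN)
  | .gex F => .gex (fun d => (F d).toN)
  | .tall F => .tall (fun d => (F d).toN)
  | .tex F => .tex (fun d => (F d).toN)
  | .sall F => .sall (fun d => (F d).toN)
  | .sex F => .sex (fun d => (F d).toN)
  | .patom p args => .patom p args
  | .cmp c l r => .cmp c l r
  | .mem t s => .mem t s
  | .teq l r => .teq l r
  | .seq l r => .seq l r
  | .fls => .fls

/-- The translation `γ`, relating the logic of here-and-there to classical logic:
`γF = F ∧ F̂` for atomic `F`, `γ(⌐F) = ¬F̂ ∧ ¬(Fⁿ)`, `γ` commutes with `∧`, `∨` and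
the quantifiers, and `γ(F → G) = (γF → γG) ∧ (F̂ → Ĝ)`. -/
def gammaA (P : Set (ℕ × ℕ)) (S : Set SetSymbol) :
    AFml (sigPS P S) → AFml (sigHat P S)
  | .patom p args => .conj ((AFml.patom p args).emb P S false) ((AFml.patom p args).emb P S true)
  | .cmp c l r => .conj ((AFml.cmp c l r).emb P S false) ((AFml.cmp c l r).emb P S true)
  | .mem t s => .conj ((AFml.mem t s).emb P S false) ((AFml.mem t s).emb P S true)
  | .teq l r => .conj ((AFml.teq l r).emb P S false) ((AFml.teq l r).emb P S true)
  | .seq l r => .conj ((AFml.seq l r).emb P S false) ((AFml.seq l r).emb P S true)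
  | .fls => .fls
  | .conj F G => .conj (gammaA P S F) (gammaA P S G)
  | .disj F G => .disj (gammaA P S F) (gammaA P S G)
  | .impl F G => .conj (.impl (gammaA P S F) (gammaA P S G))
                       (.impl (F.emb P S true) (G.emb P S true))
  | .snot F => .conj (AFml.neg (F.emb P S true)) (AFml.neg (F.toN.emb P S false))
  | .gall F => .gall (fun d => gammaA P S (F d))
  | .gex F => .gex (fun d => gammaA P S (F d))
  | .tall F => .tall (fun d => gammaA P S (F d))
  | .tex F => .tex (fun d => gammaA P S (F d))
  | .sall F => .sall (fun d => gammaA P S (F d))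
  | .sex F => .sex (fun d => gammaA P S (F d))

/-- The interpretation `I^H` of `σ̂`: it has the same domains as `I`, interprets
each intensional symbol as `H` does and its hatted copy as `I` does. -/
def IHinterp (P : Set (ℕ × ℕ)) (S : Set SetSymbol) (H I : AInterp (sigPS P S)) :
    AInterp (sigHat P S) where
  setDom := I.setDom
  pr := fun p a => if p.1 then I.pr p.2 a else H.pr p.2 a
  sfn := fun f a => if f.1 then I.sfn f.2 a else H.sfn f.2 a

/-! Structural induction on `F`. Evaluated in `I^H`, the hatted copy `F̂` behaves as `F` does in
`I`, and the unhatted copy as `F` does in `H` (the set universes agree because `H ⪯ I`); `Fⁿ` is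
classically equivalent to `F`. With these, each clause of `γ` is the corresponding clause of
ht-satisfaction, the implication case using `¬A ∨ B ↔ (A → B)`. -/

section IHinterp

variable {P : Set (ℕ × ℕ)} {S : Set SetSymbol} (H I : AInterp (sigPS P S)) (b : Bool)

mutual

theorem GTm.eval_IHinterp_emb :
    ∀ t : GTm (sigPS P S), (t.emb P S b).eval (IHinterp P S H I) = t.eval (cond b I H)
  | .name _ => rfl
  | .cnt s => by rw [GTm.emb, GTm.eval, STm.eval_IHinterp_emb s, GTm.eval]
  | .sm s => by rw [GTm.emb, GTm.eval, STm.eval_IHinterp_emb s, GTm.eval]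

theorem TTm.eval_IHinterp_emb :
    ∀ t : TTm (sigPS P S), (t.emb P S b).eval (IHinterp P S H I) = t.eval (cond b I H)
  | .name _ => rfl
  | .tup _ args => by
      rw [TTm.emb, TTm.eval]
      exact congrArg List.ofFn (funext fun i => GTm.eval_IHinterp_emb (args i))

theorem STm.eval_IHinterp_emb :
    ∀ t : STm (sigPS P S), (t.emb P S b).eval (IHinterp P S H I) = t.eval (cond b I H)
  | .name _ => rfl
  | .sfn f args => by
      have hargs := funext fun i => GTm.eval_IHinterp_emb (args i)
      cases b <;> exact congrArg _ hargs

end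

theorem satA_IHinterp_emb (hdom : H.setDom = I.setDom) (F : AFml (sigPS P S)) :
    satA (IHinterp P S H I) (F.emb P S b) ↔ satA (cond b I H) F := by
  have hdom' : (cond b I H).setDom = I.setDom := by cases b <;> simp [hdom]
  induction F with
  | patom p args =>
      change (IHinterp P S H I).pr (b, p) _ ↔ _
      simp only [GTm.eval_IHinterp_emb, satA]
      cases b <;> rfl
  | cmp => simp only [AFml.emb, satA, GTm.eval_IHinterp_emb]
  | mem => simp only [AFml.emb, satA, TTm.eval_IHinterp_emb, STm.eval_IHinterp_emb]
  | teq => simp only [AFml.emb, satA, TTm.eval_IHinterp_emb]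
  | seq => simp only [AFml.emb, satA, STm.eval_IHinterp_emb]
  | fls => rfl
  | conj _ _ ihF ihG => exact and_congr ihF ihG
  | disj _ _ ihF ihG => exact or_congr ihF ihG
  | impl _ _ ihF ihG => exact imp_congr ihF ihG
  | snot _ ihF => exact not_congr ihF
  | gall _ ih => exact forall_congr' ih
  | gex _ ih => exact exists_congr ih
  | tall _ ih => exact forall₂_congr fun d _ => ih d
  | tex _ ih => exact exists_congr fun d => and_congr_right fun _ => ih d
  | sall _ ih =>
      change (∀ d ∈ I.setDom, _) ↔ ∀ d ∈ (cond b I H).setDom, _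
      rw [hdom']
      exact forall₂_congr fun d _ => ih d
  | sex _ ih =>
      change (∃ d ∈ I.setDom, _) ↔ ∃ d ∈ (cond b I H).setDom, _
      rw [hdom']
      exact exists_congr fun d => and_congr_right fun _ => ih d

end IHinterp

theorem satA_toN {σ : ASig} (J : AInterp σ) (F : AFml σ) : satA J F.toN ↔ satA J F := by
  induction F with
  | snot _ ihF => exact imp_congr_left ihF
  | conj _ _ ihF ihG => exact and_congr ihF ihG
  | disj _ _ ihF ihG => exact or_congr ihF ihG
  | impl _ _ ihF ihG => exact imp_congr ihF ihG
  | gall _ ih => exact forall_congr' ih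
  | gex _ ih => exact exists_congr ih
  | tall _ ih => exact forall₂_congr fun d _ => ih d
  | tex _ ih => exact exists_congr fun d => and_congr_right fun _ => ih d
  | sall _ ih => exact forall₂_congr fun d _ => ih d
  | sex _ ih => exact exists_congr fun d => and_congr_right fun _ => ih d
  | _ => rfl

theorem htA_iff_satA_gammaA {P : Set (ℕ × ℕ)} {S : Set SetSymbol} (H I : AInterp (sigPS P S))
    (hdom : H.setDom = I.setDom) (F : AFml (sigPS P S)) :
    htA H I F ↔ satA (IHinterp P S H I) (gammaA P S F) := by
  have hat (G : AFml (sigPS P S)) : satA (IHinterp P S H I) (G.emb P S true) ↔ satA I G :=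
    satA_IHinterp_emb H I true hdom G
  have plain (G : AFml (sigPS P S)) : satA (IHinterp P S H I) (G.emb P S false) ↔ satA H G :=
    satA_IHinterp_emb H I false hdom G
  have atomic (G : AFml (sigPS P S)) :
      satA I G ∧ satA H G ↔ satA (IHinterp P S H I) (.conj (G.emb P S false) (G.emb P S true)) :=
    and_comm.trans (and_congr (plain G) (hat G)).symm
  induction F with
  | patom p args => exact atomic (.patom p args)
  | cmp c l r => exact atomic (.cmp c l r)
  | mem t s => exact atomic (.mem t s)
  | teq l r => exact atomic (.teq l r)
  | seq l r => exact atomic (.seq l r)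
  | fls => rfl
  | conj _ _ ihF ihG => exact and_congr ihF ihG
  | disj _ _ ihF ihG => exact or_congr ihF ihG
  | impl F G ihF ihG =>
      change (satA I F → satA I G) ∧ (¬htA H I F ∨ htA H I G) ↔
        (satA _ (gammaA P S F) → satA _ (gammaA P S G)) ∧
          (satA _ (F.emb P S true) → satA _ (G.emb P S true))
      simp only [hat, ← ihF, ← ihG, ← imp_iff_not_or]
      exact and_comm
  | snot F =>
      change ¬satA I F ∧ ¬satA H F ↔
        ¬satA _ (F.emb P S true) ∧ ¬satA _ (F.toN.emb P S false)
      rw [hat, plain, satA_toN]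
  | gall _ ih => exact forall_congr' ih
  | gex _ ih => exact exists_congr ih
  | tall _ ih => exact forall₂_congr fun d _ => ih d
  | tex _ ih => exact exists_congr fun d => and_congr_right fun _ => ih d
  | sall _ ih => exact forall₂_congr fun d _ => ih d
  | sex _ ih => exact exists_congr fun d => and_congr_right fun _ => ih d

/-- For every theory `Γ` of extended first-order sentences over `σ`
and every ht-interpretation `⟨H,I⟩`: `⟨H,I⟩ ⊨ht Γ` iff `I^H ⊨ γΓ` (classically). -/
theorem stmt17 (P : Set (ℕ × ℕ)) (S : Set SetSymbol)
    (H I : AInterp (sigPS P S)) (hHT : preceqA Set.univ Set.univ H I)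
    (Γ : Set (AFml (sigPS P S))) :
    htSatTh H I Γ ↔ (∀ F ∈ Γ, satA (IHinterp P S H I) (gammaA P S F)) :=
  forall₂_congr fun F _ => htA_iff_satA_gammaA H I hHT.1 F
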